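/- arXiv:2011.06311 — 2 statements merged into one kernel-verified Lean document; each statement's English description precedes it below -/
import Mathlib

section
/- Let u ∈ k^*, let γ, δ ≥ 1 be integers, let α ∈ Aff_3(k) \ B, and let α' be a lift of α which satisfies condition (C) with data m4,m5,m6 ≥ 0 and n4,n5,n6 ≥ 1. Set γ' := m5·δ + m6·γ and δ' := n5·δ + n6·γ. Then γ' ≥ γ, δ' ≥ δ, and (φ'_u ∘ α')(P_{γ,δ}) ⊆ P_{γ',δ'}. -/
open MvPolynomial

noncomputable section

namespace YasudaPaper

variable {k : Type*} [Field k]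

/-- `f := x1*x3 - x2^2` (variables: `X 0 = x1, X 1 = x2, X 2 = x3`). -/
def fP : MvPolynomial (Fin 3) k := X 0 * X 2 - X 1 ^ 2

/-- `r := x2*f + x1^2`. -/
def rP : MvPolynomial (Fin 3) k := X 1 * fP + X 0 ^ 2

/-- `g := x3*f^2 + 2*x1*x2*f + x1^3`. -/
def gP : MvPolynomial (Fin 3) k := X 2 * fP ^ 2 + 2 * X 0 * X 1 * fP + X 0 ^ 3

/-- The Jacobian derivation `Δ = Δ_{(f,g)}`, `h ↦ det ∂(f,g,h)/∂(x1,x2,x3)`. -/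
def Del (h : MvPolynomial (Fin 3) k) : MvPolynomial (Fin 3) k :=
  Matrix.det !![pderiv 0 fP, pderiv 1 fP, pderiv 2 fP;
                pderiv 0 gP, pderiv 1 gP, pderiv 2 gP;
                pderiv 0 h,  pderiv 1 h,  pderiv 2 h]

/-- `φ = exp D`: for every `h` and every `N` with `D^[N] h = 0`,
    `φ h = ∑_{i<N} D^i(h)/i!`.  (For a locally nilpotent `D` this characterizes
    the exponential automorphism.) -/
def IsExpOf {σ : Type*} (D : MvPolynomial σ k → MvPolynomial σ k)
    (φ : MvPolynomial σ k ≃ₐ[k] MvPolynomial σ k) : Prop :=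
  ∀ (h : MvPolynomial σ k) (N : ℕ), D^[N] h = 0 →
    φ h = ∑ i ∈ Finset.range N, (Nat.factorial i : k)⁻¹ • D^[i] h

/-- `α` is an affine automorphism: `α(x_i) = ∑_j a_{j,i} x_j + b_i` with `A ∈ GL₃(k)`. -/
def IsAffine (α : MvPolynomial (Fin 3) k ≃ₐ[k] MvPolynomial (Fin 3) k) : Prop :=
  ∃ (A : Matrix (Fin 3) (Fin 3) k) (b : Fin 3 → k), IsUnit A.det ∧
    ∀ i : Fin 3, α (X i) = (∑ j : Fin 3, C (A j i) * X j) + C (b i)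

/-- `Aff_3(k)` as a set of automorphisms. -/
def AffSet : Set (MvPolynomial (Fin 3) k ≃ₐ[k] MvPolynomial (Fin 3) k) := {α | IsAffine α}

/-- `α` is a triangular automorphism: `α(x_i) = a_i x_i + f_i(x_1,…,x_{i-1})`, `a_i ≠ 0`. -/
def IsTriangular (α : MvPolynomial (Fin 3) k ≃ₐ[k] MvPolynomial (Fin 3) k) : Prop :=
  ∃ (a : Fin 3 → k) (p : Fin 3 → MvPolynomial (Fin 3) k),
    (∀ i, a i ≠ 0) ∧ (∀ i, p i ∈ MvPolynomial.supported k {j | j < i}) ∧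
    (∀ i, α (X i) = C (a i) * X i + p i)

/-- `BA_3(k)` as a set of automorphisms. -/
def TriSet : Set (MvPolynomial (Fin 3) k ≃ₐ[k] MvPolynomial (Fin 3) k) := {α | IsTriangular α}

/-- The tame subgroup `TA_3(k) = ⟨Aff_3(k), BA_3(k)⟩`. -/
def TA : Subgroup (MvPolynomial (Fin 3) k ≃ₐ[k] MvPolynomial (Fin 3) k) :=
  Subgroup.closure (AffSet ∪ TriSet)

/-- `β = β_u = (u^3 x1, u^2 x2, u x3)`. -/
def IsBeta (u : k) (β : MvPolynomial (Fin 3) k ≃ₐ[k] MvPolynomial (Fin 3) k) : Prop :=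
  β (X 0) = C (u ^ 3) * X 0 ∧ β (X 1) = C (u ^ 2) * X 1 ∧ β (X 2) = C u * X 2

/-- `B = {β_u | u ∈ k^*}`. -/
def BSet : Set (MvPolynomial (Fin 3) k ≃ₐ[k] MvPolynomial (Fin 3) k) :=
  {β | ∃ u : k, u ≠ 0 ∧ IsBeta u β}

/-! Six-variable ring `k[x1,x2,x3,t_r,t_f,t_g]`:
variables `X 0 = x1, X 1 = x2, X 2 = x3, X 3 = t_r, X 4 = t_f, X 5 = t_g`. -/

/-- The inclusion of variable index sets. -/
def ι36 : Fin 3 → Fin 6 := Fin.castLE (by norm_num)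

/-- The embedding `k[x1,x2,x3] → k[x1,x2,x3,t_r,t_f,t_g]`. -/
def embP : MvPolynomial (Fin 3) k →ₐ[k] MvPolynomial (Fin 6) k := rename ι36

/-- The substitution map `π : t_r ↦ r, t_f ↦ f, t_g ↦ g` (fixing `x1,x2,x3`). -/
def piMap : MvPolynomial (Fin 6) k →ₐ[k] MvPolynomial (Fin 3) k :=
  aeval ![X 0, X 1, X 2, rP, fP, gP]

/-- The triangular derivation
`Δ' = -2 t_r t_f ∂/∂x1 + (4 x1 t_r - t_g) ∂/∂x2 + (6 x2 t_r + 2 t_f²) ∂/∂x3 - t_f t_g ∂/∂t_r`. -/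
def Del' (p : MvPolynomial (Fin 6) k) : MvPolynomial (Fin 6) k :=
  (-(2 * X 3 * X 4)) * pderiv 0 p + (4 * X 0 * X 3 - X 5) * pderiv 1 p +
  (6 * X 1 * X 3 + 2 * X 4 ^ 2) * pderiv 2 p + (-(X 4 * X 5)) * pderiv 3 p

/-- The weight `w1 = (1,2,3,1,0,1)`. -/
def w1 : Fin 6 → ℕ := ![1, 2, 3, 1, 0, 1]

/-- The weight `w2 = (0,0,0,0,1,0)`. -/
def w2 : Fin 6 → ℕ := ![0, 0, 0, 0, 1, 0]

/-- The sixth cyclic lexicographic order on exponent vectors: first compare the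
exponent of `t_g`, then lexicographically the exponents of `x1,x2,x3,t_r,t_f`. -/
def cyclicLt (a b : Fin 6 →₀ ℕ) : Prop :=
  a 5 < b 5 ∨ (a 5 = b 5 ∧ ∃ m : Fin 5,
    (∀ l : Fin 5, l < m → a l.castSucc = b l.castSucc) ∧ a m.castSucc < b m.castSucc)

/-- The leading monomial of `p` (for the sixth cyclic lexicographic order) is `m`. -/
def LeadMonIs (p : MvPolynomial (Fin 6) k) (m : Fin 6 →₀ ℕ) : Prop :=
  m ∈ p.support ∧ ∀ m' ∈ p.support, m' ≠ m → cyclicLt m' m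

/-- The exponent vector of the monomial `t_f^δ t_g^γ`. -/
def tfMon (γ δ : ℕ) : Fin 6 →₀ ℕ := Finsupp.single 4 δ + Finsupp.single 5 γ

/-- The set `P_{γ,δ}`. -/
def Pset (γ δ : ℕ) : Set (MvPolynomial (Fin 6) k) :=
  {p | p ≠ 0 ∧ weightedTotalDegree w1 p ≤ γ ∧ weightedTotalDegree w2 p ≤ δ ∧
    LeadMonIs p (tfMon γ δ)}

/-- `α'` is a lift of `α`. -/
def IsLift (α : MvPolynomial (Fin 3) k ≃ₐ[k] MvPolynomial (Fin 3) k)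
    (α' : MvPolynomial (Fin 6) k →ₐ[k] MvPolynomial (Fin 6) k) : Prop :=
  (∀ i : Fin 3, α' (X (ι36 i)) = embP (α (X i))) ∧
  (∀ p, piMap (α' p) = α (piMap p))

/-- `t = γ_j = max {i | a_{i,j} ≠ 0}` (with rows indexed `1,2,3`). -/
def TypeIs (A : Matrix (Fin 3) (Fin 3) k) (j : Fin 3) (t : ℕ) : Prop :=
  ∃ i : Fin 3, t = (i : ℕ) + 1 ∧ A i j ≠ 0 ∧ ∀ i' : Fin 3, i < i' → A i' j = 0

/-- Condition (C) for a lift `α'` of an affine automorphism of type `(γ1,γ2,γ3)`,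
relative to `φ' = exp(uΔ')`. -/
def CondC (γ1 γ2 γ3 : ℕ) (φ' : MvPolynomial (Fin 6) k ≃ₐ[k] MvPolynomial (Fin 6) k)
    (α' : MvPolynomial (Fin 6) k →ₐ[k] MvPolynomial (Fin 6) k) : Prop :=
  ∃ m4 m5 m6 n4 n5 n6 : ℕ,
    1 ≤ n4 ∧ 1 ≤ n5 ∧ 1 ≤ n6 ∧
    φ' (α' (X 3)) ∈ Pset m4 n4 ∧
    φ' (α' (X 4)) ∈ Pset m5 n5 ∧
    φ' (α' (X 5)) ∈ Pset m6 n6 ∧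
    γ1 ≤ m6 ∧ γ2 ≤ 2 * m6 ∧ γ3 ≤ 3 * m6 ∧ m4 ≤ m6 ∧
    γ1 + 1 ≤ n6 - 1 ∧ γ2 + 1 ≤ 2 * (n6 - 1) ∧ γ3 + 1 ≤ 3 * (n6 - 1) ∧ n4 ≤ n6 - 1

/-- The image of `x_j` under the affine map given by `(A, d)`, inside the six-variable ring. -/
def affImg (A : Matrix (Fin 3) (Fin 3) k) (d : Fin 3 → k) (j : Fin 3) :
    MvPolynomial (Fin 6) k :=
  (∑ i : Fin 3, C (A i j) * X (ι36 i)) + C (d j)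

/-- The image of `t_f` under the lift `α̂`:
`α̂(t_f) = α(f) + (a_{1,1}a_{3,3} - 2a_{1,2}a_{3,2} + a_{1,3}a_{3,1})(t_f - f)`. -/
def hatTf (A : Matrix (Fin 3) (Fin 3) k) (d : Fin 3 → k) : MvPolynomial (Fin 6) k :=
  (affImg A d 0 * affImg A d 2 - affImg A d 1 ^ 2) +
    C (A 0 0 * A 2 2 - 2 * (A 0 1 * A 2 1) + A 0 2 * A 2 0) *
      (X 4 - (X 0 * X 2 - X 1 ^ 2))

/-- The lift `α̂` of the affine automorphism given by `(A, d)`: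
`α̂(x_i) = α(x_i)`, `α̂(t_f)` as in `hatTf`, `α̂(t_r) = α̂(x2 t_f + x1²)`,
`α̂(t_g) = α̂(x3 t_f² + 2 x1 x2 t_f + x1³)`. -/
def hatLift (A : Matrix (Fin 3) (Fin 3) k) (d : Fin 3 → k) :
    MvPolynomial (Fin 6) k →ₐ[k] MvPolynomial (Fin 6) k :=
  aeval ![affImg A d 0, affImg A d 1, affImg A d 2,
    affImg A d 1 * hatTf A d + affImg A d 0 ^ 2,
    hatTf A d,
    affImg A d 2 * hatTf A d ^ 2 + 2 * affImg A d 0 * affImg A d 1 * hatTf A d +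
      affImg A d 0 ^ 3]


/-!
For `ψ := φ'_u ∘ α'` every variable image `ψ(X i)` lies in some `P_{a i, b i}`: for `t_r, t_f, t_g`
this is condition (C), and for `x_j` it follows from `φ'(x_i) ∈ P_{i+1, i+2}`, because `α(x_j)` is
an affine combination of `x_1, …, x_{γ_j}` in which `x_{γ_j}` occurs. `Δ'` raises neither the
`w1`-degree nor that of an auxiliary weight `wW ≥ w2`, which confines the monomials of `φ'(x_i)`
below `t_f^{i+2} t_g^{i+1}`; homogeneity of `Δ'` for the weights of `β_u` isolates the coefficient
`u^{2i+2} Δ'^{2i+2}(x_i) / (2i+2)!` of that monomial.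

Leading monomials are additive and weighted degrees subadditive under products, so a monomial `e`
of `p` is sent to a polynomial with leading monomial `t_f^{b(e)} t_g^{a(e)}` and weighted degrees
at most `a(e), b(e)`, where `a(e), b(e)` are the weights of `e` for `a, b`. The inequalities of
condition (C) make the leading monomial `e = t_f^δ t_g^γ` of `p` strictly dominant.
-/

end YasudaPaper

/-! ### Weighted total degrees -/

namespace MvPolynomial

variable {R σ τ ι : Type*}

section CommSemiring

variable [CommSemiring R] (w : σ → ℕ)

theorem IsWeightedHomogeneous.weightedTotalDegree_le {p : MvPolynomial σ R} {n : ℕ}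
    (hp : IsWeightedHomogeneous w p n) : weightedTotalDegree w p ≤ n :=
  Finset.sup_le fun _ hv => (hp (mem_support_iff.mp hv)).le

theorem weightedTotalDegree_mono_weight {w' : σ → ℕ} (h : ∀ i, w i ≤ w' i) (p : MvPolynomial σ R) :
    weightedTotalDegree w p ≤ weightedTotalDegree w' p :=
  Finset.sup_mono_fun fun v _ => by
    simp only [Finsupp.weight_apply, Finsupp.sum, smul_eq_mul]
    exact Finset.sum_le_sum fun i _ => Nat.mul_le_mul_left _ (h i)

theorem weightedTotalDegree_C (a : R) : weightedTotalDegree w (C a : MvPolynomial σ R) = 0 := by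
  classical
  refine le_antisymm (Finset.sup_le fun v hv => ?_) (Nat.zero_le _)
  rw [mem_support_iff, coeff_C] at hv
  rw [← ite_ne_right_iff.mp hv |>.1, map_zero]

theorem weightedTotalDegree_add (p q : MvPolynomial σ R) :
    weightedTotalDegree w (p + q) ≤ max (weightedTotalDegree w p) (weightedTotalDegree w q) := by
  classical
  refine Finset.sup_le fun v hv => ?_
  rcases Finset.mem_union.mp (support_add hv) with h | h
  · exact le_max_of_le_left (le_weightedTotalDegree w h)
  · exact le_max_of_le_right (le_weightedTotalDegree w h)

theorem weightedTotalDegree_mul (p q : MvPolynomial σ R) :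
    weightedTotalDegree w (p * q) ≤ weightedTotalDegree w p + weightedTotalDegree w q := by
  classical
  refine Finset.sup_le fun v hv => ?_
  obtain ⟨a, ha, b, hb, rfl⟩ := Finset.mem_add.mp (support_mul p q hv)
  rw [map_add]
  exact add_le_add (le_weightedTotalDegree w ha) (le_weightedTotalDegree w hb)

theorem weightedTotalDegree_pow (p : MvPolynomial σ R) (n : ℕ) :
    weightedTotalDegree w (p ^ n) ≤ n * weightedTotalDegree w p := by
  induction n with
  | zero => simpa using (weightedTotalDegree_C w (1 : R)).le
  | succ n ih =>
    rw [pow_succ, add_one_mul]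
    exact (weightedTotalDegree_mul w _ _).trans (Nat.add_le_add_right ih _)

theorem weightedTotalDegree_finset_prod (s : Finset ι) (f : ι → MvPolynomial σ R) :
    weightedTotalDegree w (∏ i ∈ s, f i) ≤ ∑ i ∈ s, weightedTotalDegree w (f i) := by
  classical
  induction s using Finset.induction_on with
  | empty => simpa using (weightedTotalDegree_C w (1 : R)).le
  | insert i s hi ih =>
    rw [Finset.prod_insert hi, Finset.sum_insert hi]
    exact (weightedTotalDegree_mul w _ _).trans (Nat.add_le_add_left ih _)

theorem weightedTotalDegree_finset_sum_le {s : Finset ι} {f : ι → MvPolynomial σ R} {n : ℕ}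
    (h : ∀ i ∈ s, weightedTotalDegree w (f i) ≤ n) :
    weightedTotalDegree w (∑ i ∈ s, f i) ≤ n := by
  classical
  refine Finset.sup_le fun v hv => ?_
  obtain ⟨i, hi, hv⟩ := Finset.mem_biUnion.mp (support_sum hv)
  exact (le_weightedTotalDegree w hv).trans (h i hi)

theorem weightedTotalDegree_smul_le (a : R) (p : MvPolynomial σ R) :
    weightedTotalDegree w (a • p) ≤ weightedTotalDegree w p :=
  Finset.sup_mono support_smul

theorem weightedTotalDegree_aeval_le {g : σ → MvPolynomial τ R} {w : τ → ℕ} {b : σ → ℕ}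
    (hg : ∀ i, weightedTotalDegree w (g i) ≤ b i) (p : MvPolynomial σ R) :
    weightedTotalDegree w (aeval g p) ≤ weightedTotalDegree b p := by
  conv_lhs => rw [p.as_sum, map_sum]
  refine weightedTotalDegree_finset_sum_le w fun e he => ?_
  rw [aeval_monomial, algebraMap_eq, Finsupp.prod]
  calc weightedTotalDegree w (C (coeff e p) * ∏ i ∈ e.support, g i ^ e i)
      ≤ 0 + ∑ i ∈ e.support, e i * b i := by
        refine (weightedTotalDegree_mul w _ _).trans (add_le_add (weightedTotalDegree_C w _).le ?_)
        refine (weightedTotalDegree_finset_prod w _ _).trans (Finset.sum_le_sum fun i _ => ?_)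
        exact (weightedTotalDegree_pow w _ _).trans (Nat.mul_le_mul_left _ (hg i))
    _ = Finsupp.weight b e := by simp [Finsupp.weight_apply, Finsupp.sum]
    _ ≤ weightedTotalDegree b p := le_weightedTotalDegree b he

theorem add_single_mem_support_of_mem_support_pderiv {i : σ} {p : MvPolynomial σ R}
    {b : σ →₀ ℕ} (hb : b ∈ (pderiv i p).support) : b + Finsupp.single i 1 ∈ p.support := by
  rw [mem_support_iff, coeff_pderiv] at hb
  exact mem_support_iff.mpr (left_ne_zero_of_mul hb)

theorem exists_of_mem_support_mul_pderiv {c p : MvPolynomial σ R} {i : σ} {v : σ →₀ ℕ}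
    (hv : v ∈ (c * pderiv i p).support) :
    ∃ a ∈ c.support, ∃ b, b + Finsupp.single i 1 ∈ p.support ∧ v = a + b := by
  classical
  obtain ⟨a, ha, b, hb, rfl⟩ := Finset.mem_add.mp (support_mul c _ hv)
  exact ⟨a, ha, b, add_single_mem_support_of_mem_support_pderiv hb, rfl⟩

theorem weightedTotalDegree_sum_mul_pderiv_le [Fintype σ] {c : σ → MvPolynomial σ R}
    (hc : ∀ i, weightedTotalDegree w (c i) ≤ w i) (p : MvPolynomial σ R) :
    weightedTotalDegree w (∑ i, c i * pderiv i p) ≤ weightedTotalDegree w p := by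
  refine weightedTotalDegree_finset_sum_le w fun i _ => Finset.sup_le fun v hv => ?_
  obtain ⟨a, ha, b, hb, rfl⟩ := exists_of_mem_support_mul_pderiv hv
  have := le_weightedTotalDegree w hb
  simp only [map_add, Finsupp.weight_single, one_smul] at this ⊢
  linarith [(le_weightedTotalDegree w ha).trans (hc i)]

theorem IsWeightedHomogeneous.sum_mul_pderiv [Fintype σ] {c : σ → MvPolynomial σ R} {m n : ℕ}
    (hc : ∀ i, IsWeightedHomogeneous w (c i) (w i + m)) {p : MvPolynomial σ R}
    (hp : IsWeightedHomogeneous w p n) :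
    IsWeightedHomogeneous w (∑ i, c i * pderiv i p) (n + m) := by
  refine IsWeightedHomogeneous.sum _ _ _ fun i _ v hv => ?_
  obtain ⟨a, ha, b, hb, rfl⟩ := exists_of_mem_support_mul_pderiv (mem_support_iff.mpr hv)
  have hb' := hp (mem_support_iff.mp hb)
  have ha' := hc i (mem_support_iff.mp ha)
  simp only [map_add, Finsupp.weight_single, one_smul] at hb' ⊢
  omega

end CommSemiring

section CommRing

variable [CommRing R] (w : σ → ℕ)

theorem weightedTotalDegree_neg (p : MvPolynomial σ R) :
    weightedTotalDegree w (-p) = weightedTotalDegree w p := by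
  rw [weightedTotalDegree, support_neg, weightedTotalDegree]

theorem weightedTotalDegree_sub (p q : MvPolynomial σ R) :
    weightedTotalDegree w (p - q) ≤ max (weightedTotalDegree w p) (weightedTotalDegree w q) := by
  rw [sub_eq_add_neg, ← weightedTotalDegree_neg w q]
  exact weightedTotalDegree_add w p (-q)

end CommRing

theorem aeval_monomial_ne_zero [CommRing R] [IsDomain R] {g : τ → MvPolynomial σ R}
    (hg : ∀ i, g i ≠ 0) (e : τ →₀ ℕ) {c : R} (hc : c ≠ 0) : aeval g (monomial e c) ≠ 0 := by
  rw [aeval_monomial, algebraMap_eq, Finsupp.prod]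
  exact mul_ne_zero (C_ne_zero.mpr hc) (Finset.prod_ne_zero_iff.mpr fun i _ => pow_ne_zero _ (hg i))

end MvPolynomial

/-! ### Leading terms -/

open scoped MonomialOrder

namespace MonomialOrder

variable {σ τ ι R : Type*} (m : MonomialOrder σ)

theorem leadingTerm_add_of_lt [CommSemiring R] {f g : MvPolynomial σ R}
    (h : m.degree g ≺[m] m.degree f) : m.leadingTerm (f + g) = m.leadingTerm f := by
  rw [leadingTerm, leadingTerm, m.degree_add_of_lt h, m.leadingCoeff_add_of_lt h]

theorem leadingTerm_sum_of_lt [CommSemiring R] {s : Finset ι} {f : ι → MvPolynomial σ R}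
    {i₀ : ι} (hi₀ : i₀ ∈ s) (h : ∀ i ∈ s, i ≠ i₀ → m.degree (f i) ≺[m] m.degree (f i₀)) :
    m.leadingTerm (∑ i ∈ s, f i) = m.leadingTerm (f i₀) := by
  classical
  rw [← Finset.add_sum_erase s f hi₀]
  rcases (s.erase i₀).eq_empty_or_nonempty with hs | ⟨j, hj⟩
  · rw [hs, Finset.sum_empty, add_zero]
  refine m.leadingTerm_add_of_lt (m.degree_sum_le.trans_lt ((Finset.sup_lt_iff ?_).mpr
    fun i hi => h i (Finset.mem_of_mem_erase hi) (Finset.ne_of_mem_erase hi)))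
  exact bot_le.trans_lt (h j (Finset.mem_of_mem_erase hj) (Finset.ne_of_mem_erase hj))

theorem degree_eq_of_leadingTerm_eq [CommSemiring R] {f g : MvPolynomial σ R}
    (h : m.leadingTerm f = m.leadingTerm g) : m.degree f = m.degree g := by
  rw [← m.degree_leadingTerm f, h, m.degree_leadingTerm]

theorem ne_zero_of_leadingTerm_eq [CommSemiring R] {f g : MvPolynomial σ R}
    (h : m.leadingTerm f = m.leadingTerm g) (hg : g ≠ 0) : f ≠ 0 := by
  rwa [Ne, ← m.leadingTerm_eq_zero_iff, h, m.leadingTerm_eq_zero_iff]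

theorem degree_aeval_monomial [CommRing R] [IsDomain R] {g : τ → MvPolynomial σ R}
    (hg : ∀ i, g i ≠ 0) (e : τ →₀ ℕ) {c : R} (hc : c ≠ 0) :
    m.degree (aeval g (monomial e c)) = ∑ i ∈ e.support, e i • m.degree (g i) := by
  rw [aeval_monomial, algebraMap_eq, Finsupp.prod,
    m.degree_mul (C_ne_zero.mpr hc) (Finset.prod_ne_zero_iff.mpr fun i _ => pow_ne_zero _ (hg i)),
    m.degree_C, zero_add, m.degree_prod fun i _ => pow_ne_zero _ (hg i)]
  simp only [m.degree_pow]

end MonomialOrder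

/-! ### The cyclic lexicographic order -/

theorem finRotate_symm_zero (n : ℕ) : (finRotate (n + 1)).symm 0 = Fin.last n := by
  rw [Equiv.symm_apply_eq, finRotate_last]

theorem finRotate_symm_succ {n : ℕ} (i : Fin n) :
    (finRotate (n + 1)).symm i.succ = i.castSucc := by
  rw [Equiv.symm_apply_eq, finRotate_apply, Fin.coeSucc_eq_succ]

namespace YasudaPaper

variable {k : Type*} [Field k]

open Finsupp (weight)

/-- `cyclicLt` as a monomial order: the lexicographic order after rotating `t_g` to the front. -/
def cyclicLex : MonomialOrder (Fin 6) where
  syn := Lex (Fin 6 →₀ ℕ)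
  toSyn := (Finsupp.domCongr (finRotate 6)).trans { toEquiv := toLex, map_add' := toLex_add }
  toSyn_monotone a b h :=
    Finsupp.toLex_monotone (show Finsupp.domCongr _ a ≤ Finsupp.domCongr _ b from fun _ => h _)

theorem cyclicLt_iff {a b : Fin 6 →₀ ℕ} : cyclicLt a b ↔ a ≺[cyclicLex] b := by
  change _ ↔ ∃ i, (∀ j, j < i → a ((finRotate 6).symm j) = b ((finRotate 6).symm j)) ∧
    a ((finRotate 6).symm i) < b ((finRotate 6).symm i)
  constructor
  · rintro (h | ⟨h5, m, hl, hm⟩)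
    · exact ⟨0, fun j hj => absurd hj (Fin.not_lt_zero j), by rwa [finRotate_symm_zero]⟩
    · refine ⟨m.succ, fun j hj => ?_, by rwa [finRotate_symm_succ]⟩
      cases j using Fin.cases with
      | zero => rwa [finRotate_symm_zero]
      | succ l => rw [finRotate_symm_succ]; exact hl l (Fin.succ_lt_succ_iff.mp hj)
  · rintro ⟨i, hi, hlt⟩
    cases i using Fin.cases with
    | zero => left; rwa [finRotate_symm_zero] at hlt
    | succ m =>
      have h5 := hi 0 (Fin.succ_pos m)
      rw [finRotate_symm_zero] at h5
      refine Or.inr ⟨h5, m, fun l hl => ?_, by rwa [finRotate_symm_succ] at hlt⟩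
      have hl' := hi l.succ (Fin.succ_lt_succ_iff.mpr hl)
      rwa [finRotate_symm_succ] at hl'

theorem leadMonIs_iff {p : MvPolynomial (Fin 6) k} {m : Fin 6 →₀ ℕ} :
    LeadMonIs p m ↔ p ≠ 0 ∧ cyclicLex.degree p = m := by
  constructor
  · rintro ⟨hm, hlt⟩
    have hp : p ≠ 0 := by rintro rfl; simp at hm
    refine ⟨hp, by_contra fun hne => ?_⟩
    exact (cyclicLt_iff.mp (hlt _ (cyclicLex.degree_mem_support hp) hne)).not_ge
      (cyclicLex.le_degree hm)
  · rintro ⟨hp, rfl⟩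
    exact ⟨cyclicLex.degree_mem_support hp, fun v hv hne => cyclicLt_iff.mpr <|
      (cyclicLex.le_degree hv).lt_of_ne (cyclicLex.toSyn.injective.ne hne)⟩

theorem mem_Pset_iff {γ δ : ℕ} {p : MvPolynomial (Fin 6) k} :
    p ∈ Pset γ δ ↔ p ≠ 0 ∧ weightedTotalDegree w1 p ≤ γ ∧ weightedTotalDegree w2 p ≤ δ ∧
      cyclicLex.degree p = tfMon γ δ := by
  simp only [Pset, Set.mem_ofPred_eq, leadMonIs_iff]
  tauto

theorem weight_fin6 (w : Fin 6 → ℕ) (v : Fin 6 →₀ ℕ) :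
    weight w v = v 0 * w 0 + v 1 * w 1 + v 2 * w 2 + v 3 * w 3 + v 4 * w 4 + v 5 * w 5 := by
  rw [Finsupp.weight_eq_sum, Fin.sum_univ_six]
  rfl

theorem weight_tfMon (w : Fin 6 → ℕ) (γ δ : ℕ) : weight w (tfMon γ δ) = w 4 * δ + w 5 * γ := by
  simp [tfMon, Finsupp.weight_single, mul_comm]

theorem sum_smul_tfMon {ι : Type*} (s : Finset ι) (n a b : ι → ℕ) :
    ∑ i ∈ s, n i • tfMon (a i) (b i) = tfMon (∑ i ∈ s, n i * a i) (∑ i ∈ s, n i * b i) := by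
  simp [tfMon, smul_add, Finset.sum_add_distrib, Finsupp.smul_single, Finsupp.single_finsetSum]

theorem eq_tfMon_of_eq_zero {v : Fin 6 →₀ ℕ} (h0 : v 0 = 0) (h1 : v 1 = 0) (h2 : v 2 = 0)
    (h3 : v 3 = 0) : v = tfMon (v 5) (v 4) := by
  ext i
  fin_cases i <;> simp [tfMon, *]

theorem lt_tfMon_of_lt {v : Fin 6 →₀ ℕ} {a b : ℕ} (h : v 5 < a) : v ≺[cyclicLex] tfMon a b :=
  cyclicLt_iff.mp (Or.inl (by simpa [tfMon] using h))

theorem tfMon_lt_tfMon {a b c d : ℕ} (hac : a ≤ c) (hbd : b < d) :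
    tfMon a b ≺[cyclicLex] tfMon c d := by
  rcases hac.lt_or_eq with h | rfl
  · exact lt_tfMon_of_lt (by simpa [tfMon] using h)
  · refine cyclicLt_iff.mp (Or.inr ⟨by simp [tfMon], 4, fun l hl => ?_, by simpa [tfMon] using hbd⟩)
    fin_cases l <;> simp [tfMon] at hl ⊢

/-! ### The derivation `Δ'` -/

theorem Del'_add (p q : MvPolynomial (Fin 6) k) : Del' (p + q) = Del' p + Del' q := by
  simp only [Del', map_add]; ring

theorem Del'_sub (p q : MvPolynomial (Fin 6) k) : Del' (p - q) = Del' p - Del' q := by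
  simp only [Del', map_sub]; ring

theorem Del'_neg (p : MvPolynomial (Fin 6) k) : Del' (-p) = -Del' p := by
  simp only [Del', map_neg]; ring

theorem Del'_mul (p q : MvPolynomial (Fin 6) k) : Del' (p * q) = p * Del' q + q * Del' p := by
  simp only [Del', Derivation.leibniz, smul_eq_mul]; ring

theorem Del'_pow (p : MvPolynomial (Fin 6) k) (n : ℕ) :
    Del' (p ^ n) = n * p ^ (n - 1) * Del' p := by
  simp only [Del', Derivation.leibniz_pow, smul_eq_mul, nsmul_eq_mul]; ring

theorem Del'_smul (c : k) (p : MvPolynomial (Fin 6) k) : Del' (c • p) = c • Del' p := by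
  simp only [Del', (pderiv _).map_smul, mul_smul_comm, smul_add]

theorem Del'_natCast (n : ℕ) : Del' (n : MvPolynomial (Fin 6) k) = 0 := by
  simp [Del', Derivation.map_natCast]

theorem Del'_ofNat (n : ℕ) [n.AtLeastTwo] :
    Del' (no_index (OfNat.ofNat n) : MvPolynomial (Fin 6) k) = 0 :=
  Del'_natCast n

theorem Del'_X (i : Fin 6) :
    Del' (X i : MvPolynomial (Fin 6) k) = ![-(2 * X 3 * X 4), 4 * X 0 * X 3 - X 5,
      6 * X 1 * X 3 + 2 * X 4 ^ 2, -(X 4 * X 5), 0, 0] i := by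
  fin_cases i <;> simp [Del', pderiv_X]

theorem Del'_eq_sum (p : MvPolynomial (Fin 6) k) : Del' p = ∑ i, Del' (X i) * pderiv i p := by
  simp [Fin.sum_univ_six, Del']

theorem Del'_iterate_X (i : Fin 3) :
    Del'^[2 * i + 2] (X (ι36 i)) = monomial (tfMon (i + 1) (i + 2)) (![2, -24, 720] i : k) := by
  fin_cases i <;>
  · simp [Function.iterate_succ_apply', Del'_add, Del'_sub, Del'_neg, Del'_mul, Del'_pow,
      Del'_ofNat, Del'_X, ι36, tfMon, monomial_add_single, ← C_mul_X_pow_eq_monomial, map_ofNat]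
    ring

theorem Del'_monomial_tfMon (a b : ℕ) (c : k) : Del' (monomial (tfMon a b) c) = 0 := by
  simp [Del', pderiv_monomial, tfMon]

theorem Del'_iterate_X_eq_zero (i : Fin 3) :
    Del'^[2 * i + 3] (X (ι36 i) : MvPolynomial (Fin 6) k) = 0 := by
  rw [Function.iterate_succ_apply', Del'_iterate_X, Del'_monomial_tfMon]

/-- A weight dominating `w2` which `Δ'` does not raise, with `wW (x_i) = i + 2`. -/
def wW : Fin 6 → ℕ := ![2, 3, 4, 1, 1, 0]

/-- The weights `3, 2, 1` of `x1, x2, x3` under `β_u`, extended by the weights `6, 4, 9` of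
`r, f, g`: `Δ'` is homogeneous of degree `7` for them. -/
def wH : Fin 6 → ℕ := ![3, 2, 1, 6, 4, 9]

theorem isWeightedHomogeneous_Del'_X_summands (w : Fin 6 → ℕ) :
    IsWeightedHomogeneous w (-(2 * X 3 * X 4) : MvPolynomial (Fin 6) k) (w 3 + w 4) ∧
    IsWeightedHomogeneous w (4 * X 0 * X 3 : MvPolynomial (Fin 6) k) (w 0 + w 3) ∧
    IsWeightedHomogeneous w (6 * X 1 * X 3 : MvPolynomial (Fin 6) k) (w 1 + w 3) ∧
    IsWeightedHomogeneous w (2 * X 4 ^ 2 : MvPolynomial (Fin 6) k) (2 * w 4) ∧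
    IsWeightedHomogeneous w (-(X 4 * X 5) : MvPolynomial (Fin 6) k) (w 4 + w 5) := by
  have hX := isWeightedHomogeneous_X k w
  have hC := fun c : k => (isWeightedHomogeneous_C w c : IsWeightedHomogeneous w _ 0)
  refine ⟨?_, ?_, ?_, ?_, ((hX 4).mul (hX 5)).neg⟩
  · simpa [map_ofNat] using (((hC 2).mul (hX 3)).mul (hX 4)).neg
  · simpa [map_ofNat] using ((hC 4).mul (hX 0)).mul (hX 3)
  · simpa [map_ofNat] using ((hC 6).mul (hX 1)).mul (hX 3)
  · simpa [mul_comm, map_ofNat] using (hC 2).mul ((hX 4).pow 2)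

theorem weightedTotalDegree_Del'_le {w : Fin 6 → ℕ} (h0 : w 3 + w 4 ≤ w 0)
    (h1 : w 0 + w 3 ≤ w 1) (h1' : w 5 ≤ w 1) (h2 : w 1 + w 3 ≤ w 2) (h2' : 2 * w 4 ≤ w 2)
    (h3 : w 4 + w 5 ≤ w 3) (p : MvPolynomial (Fin 6) k) :
    weightedTotalDegree w (Del' p) ≤ weightedTotalDegree w p := by
  obtain ⟨t0, t1, t2, t2', t3⟩ := isWeightedHomogeneous_Del'_X_summands (k := k) w
  rw [Del'_eq_sum]
  refine weightedTotalDegree_sum_mul_pderiv_le w (fun i => ?_) p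
  fin_cases i <;> simp only [Del'_X] <;> simp [weightedTotalDegree_zero]
  · exact t0.weightedTotalDegree_le.trans h0
  · exact (weightedTotalDegree_sub w _ _).trans (max_le (t1.weightedTotalDegree_le.trans h1)
      ((isWeightedHomogeneous_X k w 5).weightedTotalDegree_le.trans h1'))
  · exact (weightedTotalDegree_add w _ _).trans
      (max_le (t2.weightedTotalDegree_le.trans h2) (t2'.weightedTotalDegree_le.trans h2'))
  · exact t3.weightedTotalDegree_le.trans h3

theorem isWeightedHomogeneous_Del' {p : MvPolynomial (Fin 6) k} {n : ℕ}
    (hp : IsWeightedHomogeneous wH p n) : IsWeightedHomogeneous wH (Del' p) (n + 7) := by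
  obtain ⟨t0, t1, t2, t2', t3⟩ := isWeightedHomogeneous_Del'_X_summands (k := k) wH
  rw [Del'_eq_sum]
  refine IsWeightedHomogeneous.sum_mul_pderiv wH (fun i => ?_) hp
  fin_cases i <;> simp only [Del'_X]
  · exact t0
  · exact t1.sub (isWeightedHomogeneous_X k wH 5)
  · exact t2.add t2'
  · exact t3
  · exact isWeightedHomogeneous_zero k wH _
  · exact isWeightedHomogeneous_zero k wH _

theorem le_tfMon_of_weight_le {v : Fin 6 →₀ ℕ} {n : ℕ} (h1 : weight w1 v ≤ n)
    (hW : weight wW v ≤ n + 1) : v ≼[cyclicLex] tfMon n (n + 1) := by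
  simp [weight_fin6, w1, wW] at h1 hW
  rcases lt_or_ge (v 5) n with h | h
  · exact (lt_tfMon_of_lt h).le
  rw [eq_tfMon_of_eq_zero (v := v) (by omega) (by omega) (by omega) (by omega),
    show v 5 = n by omega]
  rcases (show v 4 ≤ n + 1 by omega).lt_or_eq with h4 | h4
  · exact (tfMon_lt_tfMon le_rfl h4).le
  · rw [h4]

theorem lt_or_lt_of_ne_tfMon {v : Fin 6 →₀ ℕ} {γ δ : ℕ} (h1 : weight w1 v ≤ γ) (h2 : v 4 ≤ δ)
    (hne : v ≠ tfMon γ δ) : v 5 < γ ∨ v 4 < δ := by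
  by_contra! h
  simp [weight_fin6, w1] at h1
  exact hne ((eq_tfMon_of_eq_zero (v := v) (by omega) (by omega) (by omega) (by omega)).trans
    (by rw [show v 5 = γ by omega, show v 4 = δ by omega]))

/-! ### The images of `x1, x2, x3` under `exp(uΔ')` -/

theorem IsExpOf.weightedTotalDegree_le {σ : Type*} {D : MvPolynomial σ k → MvPolynomial σ k}
    {φ : MvPolynomial σ k ≃ₐ[k] MvPolynomial σ k} (hφ : IsExpOf D φ) {w : σ → ℕ}
    (hD : ∀ p, weightedTotalDegree w (D p) ≤ weightedTotalDegree w p)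
    {h : MvPolynomial σ k} {N : ℕ} (hN : D^[N] h = 0) :
    weightedTotalDegree w (φ h) ≤ weightedTotalDegree w h := by
  have hiter (j : ℕ) : weightedTotalDegree w (D^[j] h) ≤ weightedTotalDegree w h := by
    induction j with
    | zero => rfl
    | succ j ih => exact (Function.iterate_succ_apply' D j h ▸ hD _).trans ih
  rw [hφ h N hN]
  exact weightedTotalDegree_finset_sum_le w fun j _ =>
    (weightedTotalDegree_smul_le w _ _).trans (hiter j)

theorem iterate_smul_Del' (u : k) (j : ℕ) (p : MvPolynomial (Fin 6) k) :
    (fun p => u • Del' p)^[j] p = u ^ j • Del'^[j] p := by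
  induction j with
  | zero => simp
  | succ j ih =>
    rw [Function.iterate_succ_apply', ih, Del'_smul, Function.iterate_succ_apply', smul_smul,
      pow_succ']

theorem iterate_smul_Del'_X_eq_zero (u : k) (i : Fin 3) :
    (fun p : MvPolynomial (Fin 6) k => u • Del' p)^[2 * i + 3] (X (ι36 i)) = 0 := by
  rw [iterate_smul_Del', Del'_iterate_X_eq_zero, smul_zero]

theorem isWeightedHomogeneous_Del'_iterate_X (i : Fin 6) (j : ℕ) :
    IsWeightedHomogeneous wH (Del'^[j] (X i) : MvPolynomial (Fin 6) k) (wH i + 7 * j) := by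
  induction j with
  | zero => exact isWeightedHomogeneous_X k wH i
  | succ j ih => rw [Function.iterate_succ_apply']; exact isWeightedHomogeneous_Del' ih

section Exp

variable {u : k} {φ' : MvPolynomial (Fin 6) k ≃ₐ[k] MvPolynomial (Fin 6) k}

theorem weightedTotalDegree_phi_X_le (hφ' : IsExpOf (fun p => u • Del' p) φ') {w : Fin 6 → ℕ}
    (hD : ∀ p : MvPolynomial (Fin 6) k, weightedTotalDegree w (Del' p) ≤ weightedTotalDegree w p)
    (i : Fin 3) : weightedTotalDegree w (φ' (X (ι36 i))) ≤ w (ι36 i) :=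
  (hφ'.weightedTotalDegree_le (fun p => (weightedTotalDegree_smul_le w u _).trans (hD p))
    (iterate_smul_Del'_X_eq_zero u i)).trans
    (isWeightedHomogeneous_X k w _).weightedTotalDegree_le

/-- By `wH`-homogeneity only the term `Δ'^(2i+2)(x_i) / (2i+2)!` of `exp(uΔ')(x_i)` contributes. -/
theorem coeff_tfMon_phi_X_ne_zero [CharZero k] (hu : u ≠ 0)
    (hφ' : IsExpOf (fun p => u • Del' p) φ') (i : Fin 3) :
    coeff (tfMon (i + 1) (i + 2)) (φ' (X (ι36 i))) ≠ 0 := by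
  rw [hφ' _ _ (iterate_smul_Del'_X_eq_zero u i), coeff_sum,
    Finset.sum_eq_single (2 * (i : ℕ) + 2)]
  · rw [iterate_smul_Del', Del'_iterate_X, coeff_smul, coeff_smul, coeff_monomial, if_pos rfl]
    refine smul_ne_zero (inv_ne_zero (Nat.cast_ne_zero.mpr (Nat.factorial_ne_zero _)))
      (smul_ne_zero (pow_ne_zero _ hu) ?_)
    fin_cases i <;> norm_num
  · intro j _ hj
    rw [coeff_smul, iterate_smul_Del', coeff_smul,
      (isWeightedHomogeneous_Del'_iterate_X _ j).coeff_eq_zero, smul_zero, smul_zero]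
    rw [weight_tfMon]
    fin_cases i <;> simp [wH, ι36] at hj ⊢ <;> omega
  · intro h
    exact absurd (Finset.mem_range.mpr (by omega)) h

theorem phi_X_mem_Pset [CharZero k] (hu : u ≠ 0) (hφ' : IsExpOf (fun p => u • Del' p) φ')
    (i : Fin 3) : φ' (X (ι36 i)) ∈ Pset (i + 1) (i + 2) := by
  have h1 : weightedTotalDegree w1 (φ' (X (ι36 i))) ≤ i + 1 :=
    (weightedTotalDegree_phi_X_le hφ' (weightedTotalDegree_Del'_le (by decide) (by decide)
      (by decide) (by decide) (by decide) (by decide)) i).trans (by fin_cases i <;> decide)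
  have hW : weightedTotalDegree wW (φ' (X (ι36 i))) ≤ i + 2 :=
    (weightedTotalDegree_phi_X_le hφ' (weightedTotalDegree_Del'_le (by decide) (by decide)
      (by decide) (by decide) (by decide) (by decide)) i).trans (by fin_cases i <;> decide)
  have hcoeff := coeff_tfMon_phi_X_ne_zero hu hφ' i
  refine mem_Pset_iff.mpr ⟨fun h => hcoeff (by rw [h, coeff_zero]), h1,
    (weightedTotalDegree_mono_weight w2 (by decide) _).trans hW, cyclicLex.toSyn.injective ?_⟩
  refine le_antisymm (cyclicLex.degree_le_iff.mpr fun v hv => ?_)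
    (cyclicLex.le_degree (mem_support_iff.mpr hcoeff))
  exact le_tfMon_of_weight_le ((le_weightedTotalDegree w1 hv).trans h1)
    ((le_weightedTotalDegree wW hv).trans hW)

theorem sum_C_mul_add_C_mem_Pset {q : Fin 3 → MvPolynomial (Fin 6) k}
    (hq : ∀ i : Fin 3, q i ∈ Pset (i + 1) (i + 2)) {c : Fin 3 → k} (c₀ : k) {r : Fin 3}
    (hr : c r ≠ 0) (hz : ∀ i, r < i → c i = 0) :
    ∑ i, C (c i) * q i + C c₀ ∈ Pset (r + 1) (r + 2) := by
  have hq' := fun i => mem_Pset_iff.mp (hq i)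
  have hdeg (i : Fin 3) (hi : c i ≠ 0) :
      cyclicLex.degree (C (c i) * q i) = tfMon (i + 1) (i + 2) := by
    rw [cyclicLex.degree_mul (C_ne_zero.mpr hi) (hq' i).1, cyclicLex.degree_C, zero_add,
      (hq' i).2.2.2]
  have hle (i : Fin 3) (hi : c i ≠ 0) : i ≤ r := not_lt.mp fun h => hi (hz i h)
  have hsum := cyclicLex.leadingTerm_sum_of_lt (f := fun i => C (c i) * q i) (Finset.mem_univ r)
    fun i _ hi => by
      rw [hdeg r hr]
      by_cases hci : c i = 0
      · rw [hci, C_0, zero_mul, cyclicLex.degree_zero]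
        exact lt_tfMon_of_lt (by simp)
      · rw [hdeg i hci]
        have : (i : ℕ) < r := Fin.lt_def.mp (lt_of_le_of_ne (hle i hci) hi)
        exact tfMon_lt_tfMon (by omega) (by omega)
  have hlead := (cyclicLex.leadingTerm_add_of_lt (f := ∑ i, C (c i) * q i) (g := C c₀) (by
    rw [cyclicLex.degree_C, cyclicLex.degree_eq_of_leadingTerm_eq hsum, hdeg r hr]
    exact lt_tfMon_of_lt (by simp))).trans hsum
  have hw {w : Fin 6 → ℕ} {n : ℕ} (hn : ∀ i, weightedTotalDegree w (q i) ≤ i + n) :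
      weightedTotalDegree w (∑ i, C (c i) * q i + C c₀) ≤ r + n := by
    refine (weightedTotalDegree_add w _ _).trans (max_le ?_ (by simp [weightedTotalDegree_C]))
    refine weightedTotalDegree_finset_sum_le w fun i _ => ?_
    by_cases hci : c i = 0
    · simp [hci, weightedTotalDegree_zero]
    · refine (weightedTotalDegree_mul w _ _).trans ?_
      rw [weightedTotalDegree_C, zero_add]
      exact (hn i).trans (by have := hle i hci; omega)
  refine mem_Pset_iff.mpr ⟨cyclicLex.ne_zero_of_leadingTerm_eq hlead
    (mul_ne_zero (C_ne_zero.mpr hr) (hq' r).1), hw fun i => (hq' i).2.1,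
    hw fun i => (hq' i).2.2.1, ?_⟩
  rw [cyclicLex.degree_eq_of_leadingTerm_eq hlead, hdeg r hr]

theorem phi_affImg_mem_Pset [CharZero k] (hu : u ≠ 0) (hφ' : IsExpOf (fun p => u • Del' p) φ')
    {A : Matrix (Fin 3) (Fin 3) k} (d : Fin 3 → k) {j : Fin 3} {t : ℕ} (ht : TypeIs A j t) :
    φ' (affImg A d j) ∈ Pset t (t + 1) := by
  obtain ⟨r, rfl, hr, hz⟩ := ht
  have hC (c : k) : φ' (C c) = C c := φ'.commutes c
  have : φ' (affImg A d j) = ∑ i, C (A i j) * φ' (X (ι36 i)) + C (d j) := by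
    simp [affImg, hC]
  rw [this]
  exact sum_C_mul_add_C_mem_Pset (phi_X_mem_Pset hu hφ') (d j) hr hz

end Exp

/-! ### Substitution -/

theorem IsLift.apply_X_eq_affImg {α : MvPolynomial (Fin 3) k ≃ₐ[k] MvPolynomial (Fin 3) k}
    {α' : MvPolynomial (Fin 6) k →ₐ[k] MvPolynomial (Fin 6) k} (hlift : IsLift α α')
    {A : Matrix (Fin 3) (Fin 3) k} {d : Fin 3 → k}
    (hαA : ∀ i : Fin 3, α (X i) = (∑ j : Fin 3, C (A j i) * X j) + C (d i)) (i : Fin 3) :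
    α' (X (ι36 i)) = affImg A d i := by
  simp [hlift.1, hαA, embP, affImg]

theorem aeval_mem_Pset {g : Fin 6 → MvPolynomial (Fin 6) k} {a b : Fin 6 → ℕ}
    (hg : ∀ i, g i ∈ Pset (a i) (b i)) {γ δ : ℕ} {p : MvPolynomial (Fin 6) k}
    (hp : p ∈ Pset γ δ) (hab : ∀ e ∈ p.support, e ≠ tfMon γ δ →
      weight a e ≤ weight a (tfMon γ δ) ∧ weight b e < weight b (tfMon γ δ)) :
    aeval g p ∈ Pset (weight a (tfMon γ δ)) (weight b (tfMon γ δ)) := by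
  have hg' := fun i => mem_Pset_iff.mp (hg i)
  obtain ⟨hp0, -, -, hpdeg⟩ := mem_Pset_iff.mp hp
  have hD : tfMon γ δ ∈ p.support := hpdeg ▸ cyclicLex.degree_mem_support hp0
  have hdeg (e) (he : e ∈ p.support) :
      cyclicLex.degree (aeval g (monomial e (coeff e p))) = tfMon (weight a e) (weight b e) := by
    rw [cyclicLex.degree_aeval_monomial (fun i => (hg' i).1) e (mem_support_iff.mp he)]
    simp only [(hg' _).2.2.2, sum_smul_tfMon, Finsupp.weight_apply, Finsupp.sum, smul_eq_mul]
  have hlead : cyclicLex.leadingTerm (aeval g p) =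
      cyclicLex.leadingTerm (aeval g (monomial (tfMon γ δ) (coeff (tfMon γ δ) p))) := by
    conv_lhs => rw [p.as_sum, map_sum]
    refine cyclicLex.leadingTerm_sum_of_lt hD fun e he hne => ?_
    rw [hdeg e he, hdeg _ hD]
    exact tfMon_lt_tfMon (hab e he hne).1 (hab e he hne).2
  have hw {w c : Fin 6 → ℕ} (hc : ∀ i, weightedTotalDegree w (g i) ≤ c i)
      (hce : ∀ e ∈ p.support, e ≠ tfMon γ δ → weight c e ≤ weight c (tfMon γ δ)) :
      weightedTotalDegree w (aeval g p) ≤ weight c (tfMon γ δ) :=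
    (weightedTotalDegree_aeval_le hc p).trans <| Finset.sup_le fun e he => by
      rcases eq_or_ne e (tfMon γ δ) with rfl | hne
      exacts [le_rfl, hce e he hne]
  refine mem_Pset_iff.mpr ⟨cyclicLex.ne_zero_of_leadingTerm_eq hlead
    (aeval_monomial_ne_zero (fun i => (hg' i).1) _ (mem_support_iff.mp hD)),
    hw (fun i => (hg' i).2.1) fun e he hne => (hab e he hne).1,
    hw (fun i => (hg' i).2.2.1) fun e he hne => (hab e he hne).2.le, ?_⟩
  rw [cyclicLex.degree_eq_of_leadingTerm_eq hlead, hdeg _ hD]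

theorem weight_le_and_lt_of_condC {γ δ γ1 γ2 γ3 m4 m5 m6 n4 n5 n6 : ℕ} (hn5 : 1 ≤ n5)
    (hc2a : γ1 ≤ m6) (hc2b : γ2 ≤ 2 * m6) (hc2c : γ3 ≤ 3 * m6) (hc2d : m4 ≤ m6)
    (hc3a : γ1 + 1 ≤ n6 - 1) (hc3b : γ2 + 1 ≤ 2 * (n6 - 1)) (hc3c : γ3 + 1 ≤ 3 * (n6 - 1))
    (hc3d : n4 ≤ n6 - 1) {e : Fin 6 →₀ ℕ} (h1 : weight w1 e ≤ γ) (h2 : e 4 ≤ δ)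
    (h : e 5 < γ ∨ e 4 < δ) :
    weight ![γ1, γ2, γ3, m4, m5, m6] e ≤ m5 * δ + m6 * γ ∧
      weight ![γ1 + 1, γ2 + 1, γ3 + 1, n4, n5, n6] e < n5 * δ + n6 * γ := by
  simp [weight_fin6, w1] at h1 ⊢
  obtain ⟨M, rfl⟩ : ∃ M, n6 = M + 1 := ⟨n6 - 1, by omega⟩
  simp only [Nat.add_sub_cancel] at hc3a hc3b hc3c hc3d
  constructor
  · nlinarith
  · rcases h with h | h <;> nlinarith

theorem statement13_general [CharZero k]
    (u : k) (hu : u ≠ 0)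
    (φ' : MvPolynomial (Fin 6) k ≃ₐ[k] MvPolynomial (Fin 6) k)
    (hφ' : IsExpOf (fun p => u • Del' p) φ')
    (γ δ : ℕ)
    (α : MvPolynomial (Fin 3) k ≃ₐ[k] MvPolynomial (Fin 3) k)
    (A : Matrix (Fin 3) (Fin 3) k) (d : Fin 3 → k)
    (hαA : ∀ i : Fin 3, α (X i) = (∑ j : Fin 3, C (A j i) * X j) + C (d i))
    (γ1 γ2 γ3 : ℕ)
    (ht1 : TypeIs A 0 γ1) (ht2 : TypeIs A 1 γ2) (ht3 : TypeIs A 2 γ3)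
    (α' : MvPolynomial (Fin 6) k →ₐ[k] MvPolynomial (Fin 6) k)
    (hlift : IsLift α α')
    (m4 m5 m6 n4 n5 n6 : ℕ)
    (hn5 : 1 ≤ n5)
    (hc1r : φ' (α' (X 3)) ∈ Pset m4 n4)
    (hc1f : φ' (α' (X 4)) ∈ Pset m5 n5)
    (hc1g : φ' (α' (X 5)) ∈ Pset m6 n6)
    (hc2a : γ1 ≤ m6) (hc2b : γ2 ≤ 2 * m6) (hc2c : γ3 ≤ 3 * m6) (hc2d : m4 ≤ m6)
    (hc3a : γ1 + 1 ≤ n6 - 1) (hc3b : γ2 + 1 ≤ 2 * (n6 - 1))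
    (hc3c : γ3 + 1 ≤ 3 * (n6 - 1)) (hc3d : n4 ≤ n6 - 1) :
    γ ≤ m5 * δ + m6 * γ ∧ δ ≤ n5 * δ + n6 * γ ∧
      ∀ p ∈ Pset γ δ, φ' (α' p) ∈ Pset (m5 * δ + m6 * γ) (n5 * δ + n6 * γ) := by
  have hm6 : 1 ≤ m6 := by obtain ⟨r, rfl, -⟩ := ht1; omega
  refine ⟨by nlinarith, by nlinarith, fun p hp => ?_⟩
  have hX (i : Fin 6) : φ' (α' (X i)) ∈
      Pset (![γ1, γ2, γ3, m4, m5, m6] i) (![γ1 + 1, γ2 + 1, γ3 + 1, n4, n5, n6] i) := by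
    fin_cases i
    · exact hlift.apply_X_eq_affImg hαA 0 ▸ phi_affImg_mem_Pset hu hφ' d ht1
    · exact hlift.apply_X_eq_affImg hαA 1 ▸ phi_affImg_mem_Pset hu hφ' d ht2
    · exact hlift.apply_X_eq_affImg hαA 2 ▸ phi_affImg_mem_Pset hu hφ' d ht3
    exacts [hc1r, hc1f, hc1g]
  have hψ : φ' (α' p) = aeval (fun i => φ' (α' (X i))) p :=
    DFunLike.congr_fun (aeval_unique (φ'.toAlgHom.comp α')) p
  obtain ⟨-, h1, h2, -⟩ := mem_Pset_iff.mp hp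
  simpa [hψ, weight_tfMon] using aeval_mem_Pset hX hp fun e he hne => by
    have he1 := (le_weightedTotalDegree w1 he).trans h1
    have he2 : e 4 ≤ δ := by simpa [weight_fin6, w2] using (le_weightedTotalDegree w2 he).trans h2
    simpa [weight_tfMon] using weight_le_and_lt_of_condC (m5 := m5) hn5 hc2a hc2b hc2c hc2d
      hc3a hc3b hc3c hc3d he1 he2 (lt_or_lt_of_ne_tfMon he1 he2 hne)

/-- (Lemma 2 of the paper.)  If a lift `α'` of
`α ∈ Aff_3(k) \ B` (of type `(γ1,γ2,γ3)`) satisfies condition (C) with data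
`m4,m5,m6 ≥ 0`, `n4,n5,n6 ≥ 1`, then for `γ' = m5·δ + m6·γ` and
`δ' = n5·δ + n6·γ` one has `γ' ≥ γ`, `δ' ≥ δ` and
`(φ'_u ∘ α')(P_{γ,δ}) ⊆ P_{γ',δ'}`. -/
theorem statement13 [CharZero k]
    (hln6 : ∀ p : MvPolynomial (Fin 6) k, ∃ l : ℕ, Del'^[l] p = 0)
    (u : k) (hu : u ≠ 0)
    (φ' : MvPolynomial (Fin 6) k ≃ₐ[k] MvPolynomial (Fin 6) k)
    (hφ' : IsExpOf (fun p => u • Del' p) φ')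
    (γ δ : ℕ) (hγ : 1 ≤ γ) (hδ : 1 ≤ δ)
    (α : MvPolynomial (Fin 3) k ≃ₐ[k] MvPolynomial (Fin 3) k)
    (A : Matrix (Fin 3) (Fin 3) k) (d : Fin 3 → k)
    (hdet : IsUnit A.det)
    (hαA : ∀ i : Fin 3, α (X i) = (∑ j : Fin 3, C (A j i) * X j) + C (d i))
    (hαB : α ∉ BSet)
    (γ1 γ2 γ3 : ℕ)
    (ht1 : TypeIs A 0 γ1) (ht2 : TypeIs A 1 γ2) (ht3 : TypeIs A 2 γ3)
    (α' : MvPolynomial (Fin 6) k →ₐ[k] MvPolynomial (Fin 6) k)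
    (hlift : IsLift α α')
    (m4 m5 m6 n4 n5 n6 : ℕ)
    (hn4 : 1 ≤ n4) (hn5 : 1 ≤ n5) (hn6 : 1 ≤ n6)
    (hc1r : φ' (α' (X 3)) ∈ Pset m4 n4)
    (hc1f : φ' (α' (X 4)) ∈ Pset m5 n5)
    (hc1g : φ' (α' (X 5)) ∈ Pset m6 n6)
    (hc2a : γ1 ≤ m6) (hc2b : γ2 ≤ 2 * m6) (hc2c : γ3 ≤ 3 * m6) (hc2d : m4 ≤ m6)
    (hc3a : γ1 + 1 ≤ n6 - 1) (hc3b : γ2 + 1 ≤ 2 * (n6 - 1))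
    (hc3c : γ3 + 1 ≤ 3 * (n6 - 1)) (hc3d : n4 ≤ n6 - 1) :
    γ ≤ m5 * δ + m6 * γ ∧ δ ≤ n5 * δ + n6 * γ ∧
      ∀ p ∈ Pset γ δ, φ' (α' p) ∈ Pset (m5 * δ + m6 * γ) (n5 * δ + n6 * γ) :=
  statement13_general u hu φ' hφ' γ δ α A d hαA γ1 γ2 γ3 ht1 ht2 ht3 α' hlift m4 m5 m6 n4 n5 n6 hn5
    hc1r hc1f hc1g hc2a hc2b hc2c hc2d hc3a hc3b hc3c hc3d

end YasudaPaper
end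
end

section
/- For every α ∈ Aff_3(k), the k-algebra endomorphism α̂ of k[x1,x2,x3,t_r,t_f,t_g] is a lift of α; that is, α̂(x_i) = α(x_i) for i = 1,2,3 and π ∘ α̂ = α ∘ π. -/
open MvPolynomial

noncomputable section

namespace YasudaPaper

variable {k : Type*} [Field k]

lemma piMap_Xiota36 (i : Fin 3) : (piMap (X (ι36 i)) : MvPolynomial (Fin 3) k) = X i := by
  fin_cases i <;> simp [piMap, ι36, Fin.castLE]

lemma piMap_affImg (A : Matrix (Fin 3) (Fin 3) k) (d : Fin 3 → k) (j : Fin 3) :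
    piMap (affImg A d j) = (∑ i : Fin 3, C (A i j) * X i) + C (d j) := by
  simp [affImg, map_sum, piMap_Xiota36]

lemma piMap_hatTf (A : Matrix (Fin 3) (Fin 3) k) (d : Fin 3 → k) :
    piMap (hatTf A d) =
      ((∑ i : Fin 3, C (A i 0) * X i) + C (d 0)) * ((∑ i : Fin 3, C (A i 2) * X i) + C (d 2))
        - ((∑ i : Fin 3, C (A i 1) * X i) + C (d 1)) ^ 2 := by
  have h : (piMap (X 4 - (X 0 * X 2 - X 1 ^ 2)) : MvPolynomial (Fin 3) k) = 0 := by
    simp [piMap, fP]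
  rw [hatTf, map_add, map_mul, h, mul_zero, add_zero, map_sub, map_mul, map_pow,
    piMap_affImg, piMap_affImg, piMap_affImg]

/-- For every `α ∈ Aff_3(k)` (given by `(A, d)` with
`A ∈ GL₃(k)`), the endomorphism `α̂` of `k[x1,x2,x3,t_r,t_f,t_g]` is a lift
of `α`. -/
theorem statement14 [CharZero k]
    (α : MvPolynomial (Fin 3) k ≃ₐ[k] MvPolynomial (Fin 3) k)
    (A : Matrix (Fin 3) (Fin 3) k) (d : Fin 3 → k)
    (hdet : IsUnit A.det)
    (hαA : ∀ i : Fin 3, α (X i) = (∑ j : Fin 3, C (A j i) * X j) + C (d i)) :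
    IsLift α (hatLift A d) := by
  have hemb : ∀ i : Fin 3, embP (α (X i)) = affImg A d i := by
    intro i
    rw [hαA]
    simp [embP, affImg, map_sum]
  have hL0 : hatLift A d (X 0) = affImg A d 0 := aeval_X _ 0
  have hL1 : hatLift A d (X 1) = affImg A d 1 := aeval_X _ 1
  have hL2 : hatLift A d (X 2) = affImg A d 2 := aeval_X _ 2
  have hL3 : hatLift A d (X 3) = affImg A d 1 * hatTf A d + affImg A d 0 ^ 2 := aeval_X _ 3
  have hL4 : hatLift A d (X 4) = hatTf A d := aeval_X _ 4
  have hL5 : hatLift A d (X 5) = affImg A d 2 * hatTf A d ^ 2 +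
      2 * affImg A d 0 * affImg A d 1 * hatTf A d + affImg A d 0 ^ 3 := aeval_X _ 5
  have hP0 : (piMap (X 0) : MvPolynomial (Fin 3) k) = X 0 := aeval_X _ 0
  have hP1 : (piMap (X 1) : MvPolynomial (Fin 3) k) = X 1 := aeval_X _ 1
  have hP2 : (piMap (X 2) : MvPolynomial (Fin 3) k) = X 2 := aeval_X _ 2
  have hP3 : (piMap (X 3) : MvPolynomial (Fin 3) k) = rP := aeval_X _ 3
  have hP4 : (piMap (X 4) : MvPolynomial (Fin 3) k) = fP := aeval_X _ 4
  have hP5 : (piMap (X 5) : MvPolynomial (Fin 3) k) = gP := aeval_X _ 5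
  refine ⟨?_, ?_⟩
  · intro i
    rw [hemb]
    fin_cases i <;> simp [hatLift, ι36, Fin.castLE]
  · intro p
    have h : piMap.comp (hatLift A d) = (↑α : MvPolynomial (Fin 3) k →ₐ[k] _).comp piMap := by
      apply MvPolynomial.algHom_ext
      intro i
      fin_cases i
      · show piMap (hatLift A d (X 0)) = α (piMap (X 0))
        rw [hL0, piMap_affImg, hP0, hαA]
      · show piMap (hatLift A d (X 1)) = α (piMap (X 1))
        rw [hL1, piMap_affImg, hP1, hαA]
      · show piMap (hatLift A d (X 2)) = α (piMap (X 2))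
        rw [hL2, piMap_affImg, hP2, hαA]
      · show piMap (hatLift A d (X 3)) = α (piMap (X 3))
        rw [hL3, hP3]
        simp only [rP, fP, map_add, map_mul, map_pow, map_sub, piMap_affImg, piMap_hatTf, hαA]
      · show piMap (hatLift A d (X 4)) = α (piMap (X 4))
        rw [hL4, hP4, piMap_hatTf]
        simp only [fP, map_sub, map_mul, map_pow, hαA]
      · show piMap (hatLift A d (X 5)) = α (piMap (X 5))
        rw [hL5, hP5]
        simp only [gP, fP, map_add, map_mul, map_pow, map_sub, map_ofNat, piMap_affImg,
          piMap_hatTf, hαA]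
    exact AlgHom.congr_fun h p


end YasudaPaper
end
end
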